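/- arXiv:1303.4532 — 3 statements merged into one kernel-verified Lean document; each statement's English description precedes it below -/
import Mathlib

section
/- (Lumpability) Assume condition (Cond1) holds and the initial distribution π respects {α_i}. Let π̃ be the induced distribution on {A_1,…,A_m}, π̃(A_i) = π(A_i). Then for all n ≥ 0 and all i, (π̃ P̃^n)(A_i) = (π P^n)(A_i); i.e. the aggregated chain with transition matrix P̃ started at π̃ has the same distribution over the partition classes as the original chain. -/
/-! By Cond1, if `v` has the form `v s = α j s * w j` on each class `A j`, then so
does `v P`, with `w` replaced by `w P̃`. By induction this form persists along `π P^n` and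
`π̃ P̃^n`, and summing over a class, using `∑ s ∈ A i, α i s = 1`, recovers the lumped weights. -/

open Finset Matrix Filter

theorem Finset.sum_univ_eq_sum_sum_of_existsUnique_mem {ι α M : Type*} [Fintype ι] [Fintype α]
    [DecidableEq α] [AddCommMonoid M] (A : ι → Finset α) (hA : ∀ a, ∃! i, a ∈ A i)
    (f : α → M) : ∑ a, f a = ∑ i, ∑ a ∈ A i, f a := by
  have hcover : univ.biUnion A = univ :=
    eq_univ_of_forall fun a => mem_biUnion.2 ⟨(hA a).exists.choose, mem_univ _,
      (hA a).exists.choose_spec⟩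
  have hdisj : Set.PairwiseDisjoint (↑(univ : Finset ι)) A := fun i _ j _ hij =>
    disjoint_left.2 fun a hai haj => hij ((hA a).unique hai haj)
  rw [← sum_biUnion hdisj, hcover]

section Lumping

variable {R S ι : Type*} [CommSemiring R]
  (A : ι → Finset S) (α : ι → S → R)

/-- The paper's "`v` respects `{α_i}`", with the class weights `w` made explicit. -/
def RespectsLumping (v : S → R) (w : ι → R) : Prop :=
  ∀ j, ∀ s ∈ A j, v s = α j s * w j

variable {A α}

theorem RespectsLumping.vecMul [Fintype S] [Fintype ι] [DecidableEq S]
    (hA : ∀ s, ∃! i, s ∈ A i)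
    {P : Matrix S S R} {Pt : Matrix ι ι R}
    (hPt : ∀ i j, ∀ s ∈ A j, ∑ s' ∈ A i, α i s' * P s' s = Pt i j * α j s)
    {v : S → R} {w : ι → R} (h : RespectsLumping A α v w) :
    RespectsLumping A α (v ᵥ* P) (w ᵥ* Pt) := by
  intro j s hs
  calc (v ᵥ* P) s = ∑ i, ∑ s' ∈ A i, v s' * P s' s :=
        sum_univ_eq_sum_sum_of_existsUnique_mem A hA _
    _ = ∑ i, w i * ∑ s' ∈ A i, α i s' * P s' s := by
        refine sum_congr rfl fun i _ => ?_
        rw [mul_sum]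
        exact sum_congr rfl fun s' hs' => by rw [h i s' hs']; ring
    _ = α j s * (w ᵥ* Pt) j := by
        simp only [hPt _ j s hs, Matrix.vecMul, dotProduct, mul_sum]
        exact sum_congr rfl fun i _ => by ring

theorem RespectsLumping.vecMul_pow [Fintype S] [Fintype ι] [DecidableEq S] [DecidableEq ι]
    (hA : ∀ s, ∃! i, s ∈ A i)
    {P : Matrix S S R} {Pt : Matrix ι ι R}
    (hPt : ∀ i j, ∀ s ∈ A j, ∑ s' ∈ A i, α i s' * P s' s = Pt i j * α j s)
    {v : S → R} {w : ι → R} (h : RespectsLumping A α v w) (n : ℕ) :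
    RespectsLumping A α (v ᵥ* (P ^ n)) (w ᵥ* (Pt ^ n)) := by
  induction n with
  | zero => simpa only [pow_zero, vecMul_one] using h
  | succ n ih => simpa only [pow_succ, ← vecMul_vecMul] using ih.vecMul hA hPt

theorem RespectsLumping.sum_eq {v : S → R} {w : ι → R} (h : RespectsLumping A α v w) {i : ι}
    (hα : ∑ s ∈ A i, α i s = 1) : ∑ s ∈ A i, v s = w i := by
  rw [sum_congr rfl (h i), ← sum_mul, hα, one_mul]

end Lumping

theorem stmt_3_general {S : Type*} [Fintype S] [DecidableEq S]
    {m : ℕ} (A : Fin m → Finset S)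
    (hpart : ∀ s : S, ∃! i : Fin m, s ∈ A i)
    (P : Matrix S S ℝ)
    (α : Fin m → S → ℝ)
    (hαpos : ∀ i, ∀ s ∈ A i, 0 < α i s)
    (hα1 : ∀ i, ∑ s ∈ A i, α i s = 1)
    (Pt : Matrix (Fin m) (Fin m) ℝ)
    (hPt : ∀ i j : Fin m, ∀ s ∈ A j,
      Pt i j = (∑ s' ∈ A i, α i s' * P s' s) / α j s)
    (π : S → ℝ)
    (hresp : ∀ i : Fin m, ∀ s ∈ A i, π s = α i s * ∑ s' ∈ A i, π s') :
    ∀ (n : ℕ) (i : Fin m),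
      Matrix.vecMul (fun i' => ∑ s ∈ A i', π s) (Pt ^ n) i
        = ∑ s ∈ A i, Matrix.vecMul π (P ^ n) s := by
  have hPt' : ∀ i j, ∀ s ∈ A j, ∑ s' ∈ A i, α i s' * P s' s = Pt i j * α j s :=
    fun i j s hs => by rw [hPt i j s hs, div_mul_cancel₀ _ (hαpos j s hs).ne']
  have hπ : RespectsLumping A α π fun i => ∑ s ∈ A i, π s := hresp
  intro n i
  exact ((hπ.vecMul_pow hpart hPt' n).sum_eq (hα1 i)).symm

theorem stmt_3 {S : Type*} [Fintype S] [DecidableEq S] [Nonempty S]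
    {m : ℕ} (A : Fin m → Finset S)
    (hpart : ∀ s : S, ∃! i : Fin m, s ∈ A i)
    (hne : ∀ i, (A i).Nonempty)
    (P : Matrix S S ℝ)
    (hP0 : ∀ s s' : S, 0 ≤ P s s')
    (hP1 : ∀ s : S, ∑ s' : S, P s s' = 1)
    (α : Fin m → S → ℝ)
    (hα0 : ∀ i, ∀ s : S, s ∉ A i → α i s = 0)
    (hαpos : ∀ i, ∀ s ∈ A i, 0 < α i s)
    (hα1 : ∀ i, ∑ s ∈ A i, α i s = 1)
    (Pt : Matrix (Fin m) (Fin m) ℝ)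
    (hPt : ∀ i j : Fin m, ∀ s ∈ A j,
      Pt i j = (∑ s' ∈ A i, α i s' * P s' s) / α j s)
    (π : S → ℝ) (hπ0 : ∀ s : S, 0 ≤ π s) (hπ1 : ∑ s : S, π s = 1)
    (hresp : ∀ i : Fin m, ∀ s ∈ A i, π s = α i s * ∑ s' ∈ A i, π s') :
    ∀ (n : ℕ) (i : Fin m),
      Matrix.vecMul (fun i' => ∑ s ∈ A i', π s) (Pt ^ n) i
        = ∑ s ∈ A i, Matrix.vecMul π (P ^ n) s :=
  stmt_3_general A hpart P α hαpos hα1 Pt hPt π hresp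
end

section
/- Assume condition (Cond1) holds. Then for every n ≥ 1, every s ∈ A_i and s' ∈ A_j, P̃^n(A_i, A_j) ≥ (α_i(s)/α_j(s')) · P^n(s, s'). In particular, if P^n(s, s') > 0 for some s ∈ A_i, s' ∈ A_j, then P̃^n(A_i, A_j) > 0. -/
/-!
Regard `α` as the `m × S` matrix whose `i`-th row is the distribution `α i`. Since `α i` vanishes
off `A i`, (Cond1) says exactly that `α * P = P̃ * α`, and iterating gives `α * P ^ n = P̃ ^ n * α`.
Reading off the entry `(i, s')` with `s' ∈ A j`, the left side is `∑ₛ α i s * P ^ n s s'`, which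
dominates its single term at `s`, and the right side is `P̃ ^ n i j * α j s'`.
-/

theorem Matrix.mul_pow_eq_pow_mul_of_mul_eq {l n R : Type*} [Fintype l] [DecidableEq l]
    [Fintype n] [DecidableEq n] [Semiring R] {V : Matrix l n R} {P : Matrix n n R}
    {Q : Matrix l l R} (h : V * P = Q * V) (k : ℕ) : V * P ^ k = Q ^ k * V := by
  induction k with
  | zero => simp
  | succ k ih => rw [pow_succ, ← Matrix.mul_assoc, ih, Matrix.mul_assoc, h, ← Matrix.mul_assoc,
      ← pow_succ]

section Lumping

variable {S : Type*} {m : ℕ} {A : Fin m → Finset S} {α : Fin m → S → ℝ}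

theorem mul_of_apply_of_mem_block (hpart : ∀ s : S, ∃! i : Fin m, s ∈ A i)
    (hα0 : ∀ i, ∀ s : S, s ∉ A i → α i s = 0) (Q : Matrix (Fin m) (Fin m) ℝ) (i : Fin m)
    {j : Fin m} {s : S} (hs : s ∈ A j) : (Q * Matrix.of α) i s = Q i j * α j s := by
  rw [Matrix.mul_apply, Finset.sum_eq_single j]
  · rfl
  · intro k _ hkj
    have hsk : s ∉ A k := fun hsk => hkj ((hpart s).unique hsk hs)
    simp [hα0 k s hsk]
  · simp

theorem of_mul_eq_mul_of_of_cond1 [Fintype S] (hpart : ∀ s : S, ∃! i : Fin m, s ∈ A i)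
    (hα0 : ∀ i, ∀ s : S, s ∉ A i → α i s = 0) (hαpos : ∀ i, ∀ s ∈ A i, 0 < α i s)
    {P : Matrix S S ℝ} {Pt : Matrix (Fin m) (Fin m) ℝ}
    (hPt : ∀ i j : Fin m, ∀ s ∈ A j, Pt i j = (∑ s' ∈ A i, α i s' * P s' s) / α j s) :
    Matrix.of α * P = Pt * Matrix.of α := by
  ext i s
  obtain ⟨j, hs, -⟩ := hpart s
  have hsum : (Matrix.of α * P) i s = ∑ s' ∈ A i, α i s' * P s' s :=
    (Finset.sum_subset (Finset.subset_univ _) fun s' _ hs' => by simp [hα0 i s' hs']).symm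
  rw [mul_of_apply_of_mem_block hpart hα0 Pt i hs, hPt i j s hs, hsum,
    div_mul_cancel₀ _ (hαpos j s hs).ne']

end Lumping

theorem stmt_6_general {S : Type*} [Fintype S] [DecidableEq S]
    {m : ℕ} (A : Fin m → Finset S)
    (hpart : ∀ s : S, ∃! i : Fin m, s ∈ A i)
    (P : Matrix S S ℝ)
    (hP0 : ∀ s s' : S, 0 ≤ P s s')
    (α : Fin m → S → ℝ)
    (hα0 : ∀ i, ∀ s : S, s ∉ A i → α i s = 0)
    (hαpos : ∀ i, ∀ s ∈ A i, 0 < α i s)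
    (Pt : Matrix (Fin m) (Fin m) ℝ)
    (hPt : ∀ i j : Fin m, ∀ s ∈ A j,
      Pt i j = (∑ s' ∈ A i, α i s' * P s' s) / α j s) :
    ∀ n : ℕ, 1 ≤ n → ∀ i j : Fin m, ∀ s ∈ A i, ∀ s' ∈ A j,
      (α i s / α j s') * (P ^ n) s s' ≤ (Pt ^ n) i j ∧
        (0 < (P ^ n) s s' → 0 < (Pt ^ n) i j) := by
  intro n _ i j s hs s' hs'
  have hα_nonneg : ∀ k t, 0 ≤ α k t := fun k t => by
    by_cases ht : t ∈ A k
    · exact (hαpos k t ht).le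
    · exact (hα0 k t ht).ge
  have hentry : (Matrix.of α * P ^ n) i s' = (Pt ^ n) i j * α j s' := by
    rw [Matrix.mul_pow_eq_pow_mul_of_mul_eq (of_mul_eq_mul_of_of_cond1 hpart hα0 hαpos hPt) n,
      mul_of_apply_of_mem_block hpart hα0 _ i hs']
  have hterm : α i s * (P ^ n) s s' ≤ (Pt ^ n) i j * α j s' :=
    hentry ▸ Finset.single_le_sum (f := fun t => α i t * (P ^ n) t s')
      (fun t _ => mul_nonneg (hα_nonneg i t) (Matrix.pow_apply_nonneg hP0 n t s'))
      (Finset.mem_univ s)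
  have hαj := hαpos j s' hs'
  refine ⟨?_, fun hpos => ?_⟩
  · rwa [div_mul_eq_mul_div, div_le_iff₀ hαj]
  · exact pos_of_mul_pos_left ((mul_pos (hαpos i s hs) hpos).trans_le hterm) hαj.le

theorem stmt_6 {S : Type*} [Fintype S] [DecidableEq S] [Nonempty S]
    {m : ℕ} (A : Fin m → Finset S)
    (hpart : ∀ s : S, ∃! i : Fin m, s ∈ A i)
    (hne : ∀ i, (A i).Nonempty)
    (P : Matrix S S ℝ)
    (hP0 : ∀ s s' : S, 0 ≤ P s s')
    (hP1 : ∀ s : S, ∑ s' : S, P s s' = 1)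
    (α : Fin m → S → ℝ)
    (hα0 : ∀ i, ∀ s : S, s ∉ A i → α i s = 0)
    (hαpos : ∀ i, ∀ s ∈ A i, 0 < α i s)
    (hα1 : ∀ i, ∑ s ∈ A i, α i s = 1)
    (Pt : Matrix (Fin m) (Fin m) ℝ)
    (hPt : ∀ i j : Fin m, ∀ s ∈ A j,
      Pt i j = (∑ s' ∈ A i, α i s' * P s' s) / α j s) :
    ∀ n : ℕ, 1 ≤ n → ∀ i j : Fin m, ∀ s ∈ A i, ∀ s' ∈ A j,
      (α i s / α j s') * (P ^ n) s s' ≤ (Pt ^ n) i j ∧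
        (0 < (P ^ n) s s' → 0 < (Pt ^ n) i j) :=
  stmt_6_general A hpart P hP0 α hα0 hαpos Pt hPt
end

section
/- Assume condition (Cond1) holds and P is irreducible and aperiodic (every state has period 1), with stationary distribution μ. Let π be any initial probability distribution on S and π̃(A_i) = π(A_i). Then as n → ∞: (i) (π̃ P̃^n)(A_i) − (π P^n)(A_i) → 0 for every i; and (ii) for every i and s ∈ A_i, (π P^n)(s) / (π̃ P̃^n)(A_i) → α_i(s). -/
/-!
Irreducibility and aperiodicity make some power `P ^ N` entrywise positive, by Schur's theorem on
numerical semigroups applied to the return times of each state. Doeblin's argument then shows that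
`P ^ N` contracts the `ℓ¹` norm of zero-sum vectors by the factor `1 - |S| ε`, where `ε` is its
smallest entry, so every initial distribution converges to `μ`.

Viewing `α` as an `m × S` matrix and letting `E` be the `S × m` indicator matrix of the blocks,
(Cond1) reads `α P = P̃ α`, and `α E = 1`; hence `P̃ ^ n = α P ^ n E`. So both `π̃ P̃ ^ n =
((π̃ α) P ^ n) E` and `(π P ^ n) E` tend to the block masses `μ E`, and letting `n → ∞` in
`(π̃ α) P ^ n = (π̃ P̃ ^ n) α` gives `μ = (μ E) α`, that is `μ s = α i s * μ (A i)` on `A i`.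
-/

open Finset Matrix Filter Topology

namespace Matrix

section Stochastic

variable {n κ : Type*} [Fintype n] [Fintype κ]

lemma sum_vecMul_of_sum_row_eq {M : Matrix n κ ℝ} {c : ℝ} (hM : ∀ i, ∑ j, M i j = c)
    (x : n → ℝ) : ∑ j, (x ᵥ* M) j = c * ∑ i, x i := by
  simp only [vecMul, dotProduct]
  rw [Finset.sum_comm, Finset.mul_sum]
  exact Finset.sum_congr rfl fun i _ => by rw [← Finset.mul_sum, hM, mul_comm]

lemma sum_abs_vecMul_le {M : Matrix n κ ℝ} {c : ℝ} (hM0 : ∀ i j, 0 ≤ M i j)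
    (hM : ∀ i, ∑ j, M i j = c) (x : n → ℝ) : ∑ j, |(x ᵥ* M) j| ≤ c * ∑ i, |x i| :=
  calc ∑ j, |(x ᵥ* M) j| ≤ ∑ j, ((fun i => |x i|) ᵥ* M) j :=
        sum_le_sum fun j _ => (abs_sum_le_sum_abs _ _).trans_eq <|
          Finset.sum_congr rfl fun i _ => by rw [abs_mul, abs_of_nonneg (hM0 i j)]
    _ = c * ∑ i, |x i| := sum_vecMul_of_sum_row_eq hM _

/-- Doeblin's contraction: a zero-sum vector does not see the constant `ε` subtracted from
every entry of `M`. -/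
lemma sum_abs_vecMul_le_of_sum_eq_zero {M : Matrix n κ ℝ} {ε : ℝ} (hε : ∀ i j, ε ≤ M i j)
    (hM : ∀ i, ∑ j, M i j = 1) {x : n → ℝ} (hx : ∑ i, x i = 0) :
    ∑ j, |(x ᵥ* M) j| ≤ (1 - Fintype.card κ * ε) * ∑ i, |x i| := by
  have hconst : x ᵥ* (of fun _ _ => ε : Matrix n κ ℝ) = 0 := by
    ext j
    simp [vecMul, dotProduct, ← Finset.sum_mul, hx]
  rw [← sub_zero (x ᵥ* M), ← hconst, ← vecMul_sub]
  exact sum_abs_vecMul_le (fun i j => sub_nonneg.2 (hε i j))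
    (fun i => by simp [Finset.sum_sub_distrib, hM]) x

variable [DecidableEq n]

lemma sum_vecMul_of_mem_rowStochastic {M : Matrix n n ℝ} (hM : M ∈ rowStochastic ℝ n)
    (x : n → ℝ) : ∑ j, (x ᵥ* M) j = ∑ i, x i := by
  rw [sum_vecMul_of_sum_row_eq (sum_row_of_mem_rowStochastic hM), one_mul]

lemma sum_abs_vecMul_pow_le {M : Matrix n n ℝ} (hM : M ∈ rowStochastic ℝ n) {ε : ℝ}
    (hε : ∀ i j, ε ≤ M i j) (hρ : 0 ≤ 1 - Fintype.card n * ε) {x : n → ℝ}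
    (hx : ∑ i, x i = 0) (q : ℕ) :
    ∑ j, |(x ᵥ* M ^ q) j| ≤ (1 - Fintype.card n * ε) ^ q * ∑ i, |x i| := by
  induction q with
  | zero => simp
  | succ q ih =>
    rw [pow_succ, ← vecMul_vecMul, pow_succ, mul_comm _ (1 - _), mul_assoc]
    refine (sum_abs_vecMul_le_of_sum_eq_zero hε (sum_row_of_mem_rowStochastic hM) ?_).trans
      (mul_le_mul_of_nonneg_left ih hρ)
    rw [sum_vecMul_of_mem_rowStochastic (pow_mem hM q), hx]

lemma vecMul_pow_eq_self {M : Matrix n n ℝ} {μ : n → ℝ} (hμ : μ ᵥ* M = μ) (k : ℕ) :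
    μ ᵥ* M ^ k = μ := by
  induction k with
  | zero => simp
  | succ k ih => rw [pow_succ, ← vecMul_vecMul, ih, hμ]

theorem IsPrimitive.tendsto_vecMul_pow [Nonempty n] {P : Matrix n n ℝ}
    (hP : P ∈ rowStochastic ℝ n) (hprim : P.IsPrimitive) {μ ν : n → ℝ} (hμ : μ ᵥ* P = μ)
    (hν : ∑ i, ν i = ∑ i, μ i) : Tendsto (fun k => ν ᵥ* P ^ k) atTop (𝓝 μ) := by
  obtain ⟨N, hN, hpos⟩ := hprim.exists_pos_pow
  obtain ⟨⟨i₀, j₀⟩, hmin⟩ := Finite.exists_min fun p : n × n => (P ^ N) p.1 p.2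
  set ε := (P ^ N) i₀ j₀
  have hε : ∀ i j, ε ≤ (P ^ N) i j := fun i j => hmin (i, j)
  have hρ0 : 0 ≤ 1 - Fintype.card n * ε := by
    have := Finset.card_nsmul_le_sum univ (fun j => (P ^ N) i₀ j) ε fun j _ => hε i₀ j
    rw [sum_row_of_mem_rowStochastic (pow_mem hP N), nsmul_eq_mul, card_univ] at this
    linarith
  have hρ1 : 1 - Fintype.card n * ε < 1 :=
    sub_lt_self 1 (mul_pos (Nat.cast_pos.2 Fintype.card_pos) (hpos i₀ j₀))
  set x := ν - μ
  have hx : ∑ i, x i = 0 := by simp [x, Finset.sum_sub_distrib, hν]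
  have hbound : ∀ k, ∑ j, |(x ᵥ* P ^ k) j| ≤ (1 - Fintype.card n * ε) ^ (k / N) * ∑ i, |x i| := by
    intro k
    rw [← Nat.div_add_mod k N, pow_add, pow_mul, ← vecMul_vecMul, Nat.mul_add_div hN,
      Nat.mod_div_self, add_zero]
    refine (sum_abs_vecMul_le (fun i j => nonneg_of_mem_rowStochastic (pow_mem hP _))
      (sum_row_of_mem_rowStochastic (pow_mem hP _)) _).trans ?_
    rw [one_mul]
    exact sum_abs_vecMul_pow_le (pow_mem hP N) hε hρ0 hx _
  have hgeom : Tendsto (fun k => (1 - Fintype.card n * ε) ^ (k / N) * ∑ i, |x i|) atTop (𝓝 0) := by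
    simpa using ((tendsto_pow_atTop_nhds_zero_of_lt_one hρ0 hρ1).comp
      (Nat.tendsto_div_const_atTop hN.ne')).mul_const (∑ i, |x i|)
  have hdiff : Tendsto (fun k => x ᵥ* P ^ k) atTop (𝓝 0) :=
    tendsto_pi_nhds.2 fun j => squeeze_zero_norm (fun k => (single_le_sum
      (f := fun j => |(x ᵥ* P ^ k) j|) (fun _ _ => abs_nonneg _) (mem_univ j)).trans
      (hbound k)) hgeom
  have hsplit : ∀ k, ν ᵥ* P ^ k = x ᵥ* P ^ k + μ := fun k => by
    rw [sub_vecMul, vecMul_pow_eq_self hμ, sub_add_cancel]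
  simpa [hsplit] using hdiff.add_const μ

end Stochastic

section Primitive

variable {n : Type*} [Fintype n] [DecidableEq n] {P : Matrix n n ℝ}

lemma pow_add_apply_pos (hP0 : ∀ i j, 0 ≤ P i j) {a b : ℕ} {i j k : n}
    (ha : 0 < (P ^ a) i j) (hb : 0 < (P ^ b) j k) : 0 < (P ^ (a + b)) i k := by
  rw [pow_add, mul_apply]
  exact (mul_pos ha hb).trans_le <| single_le_sum (f := fun l => (P ^ a) i l * (P ^ b) l k)
    (fun l _ => mul_nonneg (pow_apply_nonneg hP0 a i l) (pow_apply_nonneg hP0 b l k))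
    (mem_univ j)

/-- The return times to an aperiodic state form an additive submonoid of `ℕ` of gcd one, hence
contain every large enough integer (Schur). -/
lemma eventually_pow_apply_self_pos (hP0 : ∀ i j, 0 ≤ P i j) (i : n)
    (haper : ∀ d : ℕ, (∀ k : ℕ, 1 ≤ k → 0 < (P ^ k) i i → d ∣ k) → d = 1) :
    ∀ᶠ k in atTop, 0 < (P ^ k) i i := by
  set R := {k : ℕ | 0 < (P ^ k) i i}
  have hgcd : Nat.setGcd R = 1 := haper _ fun k _ hk => Nat.setGcd_dvd_of_mem hk
  obtain ⟨N, hN⟩ := Nat.exists_mem_closure_of_ge R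
  refine eventually_atTop.2 ⟨N, fun k hk => ?_⟩
  refine AddSubmonoid.closure_induction (motive := fun k _ => k ∈ R) (fun _ h => h) ?_
    (fun _ _ _ _ ha hb => pow_add_apply_pos hP0 ha hb) (hN k hk (hgcd ▸ one_dvd k))
  simp [R]

theorem isPrimitive_of_irreducible_of_aperiodic (hP0 : ∀ i j, 0 ≤ P i j)
    (hirr : ∀ i j, ∃ k : ℕ, 0 < (P ^ k) i j)
    (haper : ∀ i, ∀ d : ℕ, (∀ k : ℕ, 1 ≤ k → 0 < (P ^ k) i i → d ∣ k) → d = 1) :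
    P.IsPrimitive := by
  have hpos : ∀ᶠ k in atTop, ∀ i j, 0 < (P ^ k) i j := by
    simp only [eventually_all]
    intro i j
    obtain ⟨a, ha⟩ := hirr i j
    filter_upwards [(eventually_pow_apply_self_pos hP0 i (haper i)).comap (· - a) |>.filter_mono
      (tendsto_sub_atTop_nat a).le_comap, eventually_ge_atTop a] with k hk hak
    simpa [Nat.sub_add_cancel hak] using pow_add_apply_pos hP0 hk ha
  obtain ⟨k, hk, hk0⟩ := (hpos.and (eventually_gt_atTop 0)).exists
  exact ⟨hP0, k, hk0, hk⟩

lemma IsPrimitive.pos_of_vecMul_eq_self (hprim : P.IsPrimitive) {μ : n → ℝ}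
    (hμ0 : ∀ i, 0 ≤ μ i) (hμ1 : ∑ i, μ i = 1) (hμ : μ ᵥ* P = μ) (j : n) : 0 < μ j := by
  obtain ⟨k, -, hpos⟩ := hprim.exists_pos_pow
  obtain ⟨i, -, hi⟩ :=
    exists_lt_of_sum_lt (f := fun _ => 0) (by simp [hμ1] : ∑ i, (0 : ℝ) < ∑ i, μ i)
  rw [← vecMul_pow_eq_self hμ k]
  exact (mul_pos hi (hpos i j)).trans_le <| single_le_sum (f := fun l => μ l * (P ^ k) l j)
    (fun l _ => mul_nonneg (hμ0 l) (hpos l j).le) (mem_univ i)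

end Primitive

lemma _root_.Filter.Tendsto.vecMul_const {X n κ R : Type*} [Fintype n]
    [NonUnitalNonAssocSemiring R] [TopologicalSpace R] [IsTopologicalSemiring R] {l : Filter X}
    {f : X → n → R} {v : n → R} (h : Tendsto f l (𝓝 v)) (M : Matrix n κ R) :
    Tendsto (fun x => f x ᵥ* M) l (𝓝 (v ᵥ* M)) :=
  ((continuous_id.matrix_vecMul continuous_const).tendsto v).comp h

section Lumping

variable {ι S : Type*} [Fintype ι] [Fintype S] [DecidableEq ι] [DecidableEq S]

lemma mul_pow_eq_pow_mul {R : Type*} [Semiring R] {L : Matrix ι S R} {P : Matrix S S R}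
    {Q : Matrix ι ι R} (hLP : L * P = Q * L) (k : ℕ) : L * P ^ k = Q ^ k * L := by
  induction k with
  | zero => simp
  | succ k ih => rw [pow_succ, ← Matrix.mul_assoc, ih, Matrix.mul_assoc, hLP,
      ← Matrix.mul_assoc, ← pow_succ]

theorem tendsto_vecMul_pow_of_lumpable [Nonempty S] {P : Matrix S S ℝ}
    (hP : P ∈ rowStochastic ℝ S) (hprim : P.IsPrimitive) {μ : S → ℝ} (hμ : μ ᵥ* P = μ)
    {L : Matrix ι S ℝ} {E : Matrix S ι ℝ} {Q : Matrix ι ι ℝ} (hL : ∀ i, ∑ s, L i s = 1)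
    (hLE : L * E = 1) (hLP : L * P = Q * L) {g : ι → ℝ} (hg : ∑ i, g i = ∑ s, μ s) :
    Tendsto (fun k => g ᵥ* Q ^ k) atTop (𝓝 (μ ᵥ* E)) := by
  have hQ : ∀ k, g ᵥ* Q ^ k = ((g ᵥ* L) ᵥ* P ^ k) ᵥ* E := fun k => by
    rw [vecMul_vecMul, vecMul_vecMul, ← Matrix.mul_assoc, mul_pow_eq_pow_mul hLP,
      Matrix.mul_assoc, hLE, Matrix.mul_one]
  simp only [hQ]
  exact (hprim.tendsto_vecMul_pow hP hμ
    (by rw [sum_vecMul_of_sum_row_eq hL, one_mul, hg])).vecMul_const E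

theorem eq_vecMul_vecMul_of_lumpable [Nonempty S] {P : Matrix S S ℝ}
    (hP : P ∈ rowStochastic ℝ S) (hprim : P.IsPrimitive) {μ : S → ℝ} (hμ : μ ᵥ* P = μ)
    {L : Matrix ι S ℝ} {E : Matrix S ι ℝ} {Q : Matrix ι ι ℝ} (hL : ∀ i, ∑ s, L i s = 1)
    (hE : ∀ s, ∑ i, E s i = 1) (hLE : L * E = 1) (hLP : L * P = Q * L) :
    μ = (μ ᵥ* E) ᵥ* L := by
  have hg : ∑ i, (μ ᵥ* E) i = ∑ s, μ s := by rw [sum_vecMul_of_sum_row_eq hE, one_mul]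
  have hlift : ∀ k, (μ ᵥ* E) ᵥ* L ᵥ* P ^ k = ((μ ᵥ* E) ᵥ* Q ^ k) ᵥ* L := fun k => by
    rw [vecMul_vecMul _ L, mul_pow_eq_pow_mul hLP, ← vecMul_vecMul]
  refine tendsto_nhds_unique (hprim.tendsto_vecMul_pow hP hμ
    (by rw [sum_vecMul_of_sum_row_eq hL, one_mul, hg])) ?_
  simp only [hlift]
  exact (tendsto_vecMul_pow_of_lumpable hP hprim hμ hL hLE hLP hg).vecMul_const L

end Lumping

section Partition

variable {ι S : Type*} {A : ι → Finset S} {α : Matrix ι S ℝ}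

lemma vecMul_apply_of_mem [Fintype ι] (hpart : ∀ s, ∃! i, s ∈ A i)
    (hα0 : ∀ i s, s ∉ A i → α i s = 0) (g : ι → ℝ) {i : ι} {s : S} (hs : s ∈ A i) :
    (g ᵥ* α) s = g i * α i s :=
  Finset.sum_eq_single (f := fun j => g j * α j s) i
    (fun j _ hj => by rw [hα0 j s fun hs' => hj ((hpart s).unique hs' hs), mul_zero])
    (by simp)

lemma sum_apply_eq_one_of_support [Fintype S] (hα0 : ∀ i s, s ∉ A i → α i s = 0)
    (hα1 : ∀ i, ∑ s ∈ A i, α i s = 1) (i : ι) : ∑ s, α i s = 1 := by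
  rw [← hα1 i]
  exact (sum_subset (subset_univ _) fun s _ hs => hα0 i s hs).symm

/-- Condition (Cond1) in matrix form. -/
lemma mul_eq_mul_of_lumpable [Fintype ι] [Fintype S] (hpart : ∀ s, ∃! i, s ∈ A i)
    (hα0 : ∀ i s, s ∉ A i → α i s = 0) (hαpos : ∀ i, ∀ s ∈ A i, 0 < α i s)
    {P : Matrix S S ℝ} {Q : Matrix ι ι ℝ}
    (hQ : ∀ i j, ∀ s ∈ A j, Q i j = (∑ s' ∈ A i, α i s' * P s' s) / α j s) :
    α * P = Q * α := by
  ext i s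
  obtain ⟨j, hj, -⟩ := hpart s
  calc ∑ s', α i s' * P s' s = ∑ s' ∈ A i, α i s' * P s' s :=
        (sum_subset (subset_univ _) fun s' _ hs' => by rw [hα0 i s' hs', zero_mul]).symm
    _ = Q i j * α j s := by rw [hQ i j s hj, div_mul_cancel₀ _ (hαpos j s hj).ne']
    _ = ∑ j, Q i j * α j s := (vecMul_apply_of_mem hpart hα0 (Q i) hj).symm

variable [DecidableEq S]

variable (A) in
def blockIndicator : Matrix S ι ℝ := of fun s i => if s ∈ A i then 1 else 0

lemma vecMul_blockIndicator [Fintype S] (x : S → ℝ) :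
    x ᵥ* blockIndicator A = fun i => ∑ s ∈ A i, x s := by
  ext i
  simp [blockIndicator, vecMul, dotProduct, Finset.sum_ite_mem]

lemma sum_blockIndicator_apply [Fintype ι] (hpart : ∀ s, ∃! i, s ∈ A i) (s : S) :
    ∑ i, blockIndicator A s i = 1 := by
  obtain ⟨i, hi, huniq⟩ := hpart s
  simp only [blockIndicator, of_apply]
  rw [Finset.sum_eq_single i (fun j _ hj => if_neg fun hs => hj (huniq j hs)) (by simp)]
  exact if_pos hi

lemma mul_blockIndicator [Fintype S] [DecidableEq ι] (hpart : ∀ s, ∃! i, s ∈ A i)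
    (hα0 : ∀ i s, s ∉ A i → α i s = 0) (hα1 : ∀ i, ∑ s ∈ A i, α i s = 1) :
    α * blockIndicator A = 1 := by
  ext i j
  rw [mul_apply, one_apply]
  simp only [blockIndicator, of_apply, mul_ite, mul_one, mul_zero, sum_ite_mem, univ_inter]
  split_ifs with hij
  · exact hij ▸ hα1 i
  · exact sum_eq_zero fun s hs => hα0 i s fun hs' => hij ((hpart s).unique hs' hs)

end Partition

end Matrix

theorem stmt_13_general {S : Type*} [Fintype S] [DecidableEq S] [Nonempty S]
    {m : ℕ} (A : Fin m → Finset S)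
    (hpart : ∀ s : S, ∃! i : Fin m, s ∈ A i)
    (hne : ∀ i, (A i).Nonempty)
    (P : Matrix S S ℝ)
    (hP0 : ∀ s s' : S, 0 ≤ P s s')
    (hP1 : ∀ s : S, ∑ s' : S, P s s' = 1)
    (α : Fin m → S → ℝ)
    (hα0 : ∀ i, ∀ s : S, s ∉ A i → α i s = 0)
    (hαpos : ∀ i, ∀ s ∈ A i, 0 < α i s)
    (hα1 : ∀ i, ∑ s ∈ A i, α i s = 1)
    (Pt : Matrix (Fin m) (Fin m) ℝ)
    (hPt : ∀ i j : Fin m, ∀ s ∈ A j,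
      Pt i j = (∑ s' ∈ A i, α i s' * P s' s) / α j s)
    (hirr : ∀ s s' : S, ∃ n : ℕ, 0 < (P ^ n) s s')
    (haper : ∀ s : S, ∀ d : ℕ, (∀ n : ℕ, 1 ≤ n → 0 < (P ^ n) s s → d ∣ n) → d = 1)
    (μ : S → ℝ) (hμ0 : ∀ s : S, 0 ≤ μ s) (hμ1 : ∑ s : S, μ s = 1)
    (hμstat : Matrix.vecMul μ P = μ)
    (π : S → ℝ) (hπ1 : ∑ s : S, π s = 1) :
    (∀ i : Fin m,
        Filter.Tendsto (fun n : ℕ =>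
          Matrix.vecMul (fun i' => ∑ s ∈ A i', π s) (Pt ^ n) i
            - ∑ s ∈ A i, Matrix.vecMul π (P ^ n) s)
          Filter.atTop (nhds 0)) ∧
      (∀ i : Fin m, ∀ s ∈ A i,
        Filter.Tendsto (fun n : ℕ =>
          Matrix.vecMul π (P ^ n) s
            / Matrix.vecMul (fun i' => ∑ s' ∈ A i', π s') (Pt ^ n) i)
          Filter.atTop (nhds (α i s))) := by
  have hP : P ∈ rowStochastic ℝ S := mem_rowStochastic_iff_sum.2 ⟨hP0, hP1⟩
  have hprim := isPrimitive_of_irreducible_of_aperiodic hP0 hirr haper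
  have hα := sum_apply_eq_one_of_support hα0 hα1
  have hαE := mul_blockIndicator hpart hα0 hα1
  have hαP := mul_eq_mul_of_lumpable hpart hα0 hαpos hPt
  have hE := sum_blockIndicator_apply hpart
  have hπ : ∑ i, (π ᵥ* blockIndicator A) i = ∑ s, μ s := by
    rw [sum_vecMul_of_sum_row_eq hE, one_mul, hπ1, hμ1]
  have hconv := hprim.tendsto_vecMul_pow hP hμstat (ν := π) (by rw [hπ1, hμ1])
  have hlumped := tendsto_vecMul_pow_of_lumpable hP hprim hμstat hα hαE hαP hπ
  have hblocks := hconv.vecMul_const (blockIndicator A)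
  simp only [vecMul_blockIndicator] at hlumped hblocks
  refine ⟨fun i => ?_, fun i s hs => ?_⟩
  · simpa using (tendsto_pi_nhds.1 hlumped i).sub (tendsto_pi_nhds.1 hblocks i)
  · have hμA : 0 < ∑ s ∈ A i, μ s :=
      sum_pos (fun s _ => hprim.pos_of_vecMul_eq_self hμ0 hμ1 hμstat s) (hne i)
    have hμs : μ s = α i s * ∑ s ∈ A i, μ s := by
      rw [congrFun (eq_vecMul_vecMul_of_lumpable hP hprim hμstat hα hE hαE hαP) s,
        vecMul_apply_of_mem hpart hα0 _ hs, vecMul_blockIndicator, mul_comm]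
    have hratio := (tendsto_pi_nhds.1 hconv s).div (tendsto_pi_nhds.1 hlumped i) hμA.ne'
    rwa [hμs, mul_div_cancel_right₀ _ hμA.ne'] at hratio

theorem stmt_13 {S : Type*} [Fintype S] [DecidableEq S] [Nonempty S]
    {m : ℕ} (A : Fin m → Finset S)
    (hpart : ∀ s : S, ∃! i : Fin m, s ∈ A i)
    (hne : ∀ i, (A i).Nonempty)
    (P : Matrix S S ℝ)
    (hP0 : ∀ s s' : S, 0 ≤ P s s')
    (hP1 : ∀ s : S, ∑ s' : S, P s s' = 1)
    (α : Fin m → S → ℝ)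
    (hα0 : ∀ i, ∀ s : S, s ∉ A i → α i s = 0)
    (hαpos : ∀ i, ∀ s ∈ A i, 0 < α i s)
    (hα1 : ∀ i, ∑ s ∈ A i, α i s = 1)
    (Pt : Matrix (Fin m) (Fin m) ℝ)
    (hPt : ∀ i j : Fin m, ∀ s ∈ A j,
      Pt i j = (∑ s' ∈ A i, α i s' * P s' s) / α j s)
    (hirr : ∀ s s' : S, ∃ n : ℕ, 0 < (P ^ n) s s')
    (haper : ∀ s : S, ∀ d : ℕ, (∀ n : ℕ, 1 ≤ n → 0 < (P ^ n) s s → d ∣ n) → d = 1)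
    (μ : S → ℝ) (hμ0 : ∀ s : S, 0 ≤ μ s) (hμ1 : ∑ s : S, μ s = 1)
    (hμstat : Matrix.vecMul μ P = μ)
    (π : S → ℝ) (hπ0 : ∀ s : S, 0 ≤ π s) (hπ1 : ∑ s : S, π s = 1) :
    (∀ i : Fin m,
        Filter.Tendsto (fun n : ℕ =>
          Matrix.vecMul (fun i' => ∑ s ∈ A i', π s) (Pt ^ n) i
            - ∑ s ∈ A i, Matrix.vecMul π (P ^ n) s)
          Filter.atTop (nhds 0)) ∧
      (∀ i : Fin m, ∀ s ∈ A i,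
        Filter.Tendsto (fun n : ℕ =>
          Matrix.vecMul π (P ^ n) s
            / Matrix.vecMul (fun i' => ∑ s' ∈ A i', π s') (Pt ^ n) i)
          Filter.atTop (nhds (α i s))) :=
  stmt_13_general A hpart hne P hP0 hP1 α hα0 hαpos hα1 Pt hPt hirr haper μ hμ0 hμ1 hμstat π hπ1
end
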